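/- Partial sum formula S^k: for 0 ≤ k < n-1, Σ_{s=0}^{k} T_s = (Π_{t=r+k+1}^{r+n-1} x_j^{(t+1)}) (Π_{t=1}^{k} σ_{(n-1)(j-i)}^{(r-j+i+t)}(x_i,...,x_j)) P_k^{(r-j+i+k+1)}(x_i,...,x_j) (Π_{t=k+2}^{n-1} σ_{(n-1)(j-i)}^{(r-j+i+t)}(x_i,...,x_j)), where T_s := (Π_{t=r+s+1}^{r+n-1} x_j^{(t+1)}) (Π_{t=s+2}^{s+n-1} σ_{(n-1)(j-i)}^{(r-j+i+t)}(x_i,...,x_j)) σ_{(n-1)(j-i-1)}^{(r-j+i+s+1)}(x_i,...,x_{j-1}) (Π_{t=1}^{s} x_i^{(r-j+i+t)}). Upper indices mod n. -/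

import Mathlib

open Finset

noncomputable section BirationalR

/-- A vector of reals with cyclically indexed coordinates (upper index mod `n`). -/
abbrev Vec (n : ℕ) := ZMod n → ℝ

/-- `κ_r(a,b) = Σ_{j=r}^{r+n-1} (Π_{k=r+1}^{j} b_k)(Π_{k=j+1}^{r+n-1} a_k)`, indices mod `n`. -/
def kappaF (n : ℕ) (r : ZMod n) (a b : Vec n) : ℝ :=
  ∑ d ∈ Finset.range n,
    (∏ t ∈ Finset.range d, b (r + 1 + (t : ℕ))) *
      ∏ t ∈ Finset.range (n - 1 - d), a (r + 1 + (d : ℕ) + (t : ℕ))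

/-- First component `b'` of the birational R-matrix `η(a,b) = (b',a')`:
`b'_i = b_{i+1} κ_{i+1}(a,b)/κ_i(a,b)`. -/
def etaB (n : ℕ) (a b : Vec n) : Vec n :=
  fun i => b (i + 1) * kappaF n (i + 1) a b / kappaF n i a b

/-- Second component `a'` of `η(a,b) = (b',a')`: `a'_i = a_{i-1} κ_{i-1}(a,b)/κ_i(a,b)`. -/
def etaA (n : ℕ) (a b : Vec n) : Vec n :=
  fun i => a (i - 1) * kappaF n (i - 1) a b / kappaF n i a b

/-- `η` applied to positions `(p, p+1)` of a tuple of vectors. -/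
def etaAt (n : ℕ) (p : ℕ) (X : ℕ → Vec n) : ℕ → Vec n :=
  fun q => if q = p then etaB n (X p) (X (p + 1))
    else if q = p + 1 then etaA n (X p) (X (p + 1)) else X q

/-- Action of the word `s_{w₁} s_{w₂} ⋯ s_{wₗ}` (rightmost acts first). -/
def applyWord (n : ℕ) (w : List ℕ) (X : ℕ → Vec n) : ℕ → Vec n :=
  w.foldr (etaAt n) X

/-- The tuple `(x_i, x_{i+1}, …, x_j)` as a list. -/
def seg {n : ℕ} (x : ℕ → Vec n) (i j : ℕ) : List (Vec n) :=
  (List.range (j + 1 - i)).map fun t => x (i + t)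

/-- `τ_k^{(r)}(x_1,…,x_m)`: sum over weakly increasing `i_1 ≤ … ≤ i_k`, no index used
more than `n-1` times, of `x_{i_1}^{(r)} x_{i_2}^{(r-1)} ⋯ x_{i_k}^{(r-k+1)}`.
Encoded via multiplicity functions; `τ = 0` for negative `k`. -/
def tauF (n : ℕ) (r : ZMod n) (k : ℤ) (x : List (Vec n)) : ℝ :=
  if 0 ≤ k then
    ∑ c ∈ (Fintype.piFinset fun _ : Fin x.length => Finset.range n).filter
        (fun c => ∑ i, c i = k.toNat),
      ∏ i : Fin x.length, ∏ β ∈ Finset.range (c i),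
        x.get i (r - (∑ i' ∈ Finset.univ.filter (fun i' => i' < i), c i' : ℕ) - (β : ℕ))
  else 0

/-- `σ_k^{(r)}(x_1,…,x_m) = Σ_{t=0}^{k} x_1^{(r)} ⋯ x_1^{(r-t+1)} τ_{k-t}^{(r-t)}(x_2,…,x_m)`. -/
def sigmaF (n : ℕ) (r : ZMod n) (k : ℕ) : List (Vec n) → ℝ
  | [] => if k = 0 then 1 else 0
  | y :: rest =>
      ∑ t ∈ Finset.range (k + 1),
        (∏ β ∈ Finset.range t, y (r - (β : ℕ))) * tauF n (r - (t : ℕ)) ((k : ℤ) - (t : ℤ)) rest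

/-- `σ̄_k^{(r)}(x_1,…,x_m) = Σ_{t=0}^{k} τ_{k-t}^{(r)}(x_1,…,x_{m-1}) x_m^{(r-k+t)} ⋯ x_m^{(r-k+1)}`. -/
def sigmaBarF (n : ℕ) (r : ZMod n) (k : ℕ) : List (Vec n) → ℝ
  | [] => if k = 0 then 1 else 0
  | y :: rest =>
      ∑ t ∈ Finset.range (k + 1),
        tauF n r ((k : ℤ) - (t : ℤ)) ((y :: rest).dropLast) *
          ∏ β ∈ Finset.range t,
            (y :: rest).getLast (List.cons_ne_nil y rest) (r - (k : ℕ) + 1 + (β : ℕ))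

/-- `Ω_k^{(r)}(x_i,…,x_j) = Σ_{ℓ=0}^{n-1} σ^{(r)}_{(n-1)(k-i)+ℓ}(x_i,…,x_k)
σ̄^{(r+k-i-ℓ)}_{(n-1)(j-k)-ℓ}(x_{k+1},…,x_j)`. -/
def OmegaF (n : ℕ) (r : ZMod n) (k i j : ℕ) (x : ℕ → Vec n) : ℝ :=
  ∑ ℓ ∈ Finset.range n,
    sigmaF n r ((n - 1) * (k - i) + ℓ) (seg x i k) *
      sigmaBarF n (r + (k : ℕ) - (i : ℕ) - (ℓ : ℕ)) ((n - 1) * (j - k) - ℓ) (seg x (k + 1) j)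

/-- `P_k^{(r)}(x_i,…,x_j) = Σ_{t=0}^{k} (Π_{s=0}^{t-1} x_i^{(r-s)})
σ_{(n-1)(j-i-1)}^{(r-t)}(x_i,…,x_{j-1}) (Π_{s=0}^{k-t-1} x_j^{(r-t+j-i-1-s)})`. -/
def PF (n : ℕ) (r : ZMod n) (k i j : ℕ) (x : ℕ → Vec n) : ℝ :=
  ∑ t ∈ Finset.range (k + 1),
    (∏ s ∈ Finset.range t, x i (r - (s : ℕ))) *
      sigmaF n (r - (t : ℕ)) ((n - 1) * (j - i - 1)) (seg x i (j - 1)) *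
      ∏ s ∈ Finset.range (k - t), x j (r - (t : ℕ) + (j : ℕ) - (i : ℕ) - 1 - (s : ℕ))

end BirationalR

/-- The summand `T_s = (Π_{t=r+s+1}^{r+n-1} x_j^{(t+1)})
(Π_{t=s+2}^{s+n-1} σ_{(n-1)(j-i)}^{(r-j+i+t)}(x_i,…,x_j))
σ_{(n-1)(j-i-1)}^{(r-j+i+s+1)}(x_i,…,x_{j-1}) (Π_{t=1}^{s} x_i^{(r-j+i+t)})`. -/
noncomputable def TF (n : ℕ) (r : ZMod n) (i j : ℕ) (x : ℕ → Vec n) (s : ℕ) : ℝ :=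
  (∏ u ∈ Finset.range (n - 1 - s), x j (r + (s : ℕ) + 1 + (u : ℕ) + 1)) *
    (∏ u ∈ Finset.range (n - 2),
      sigmaF n (r - (j : ℕ) + (i : ℕ) + ((s : ℕ) + 2 + (u : ℕ))) ((n - 1) * (j - i)) (seg x i j)) *
    sigmaF n (r - (j : ℕ) + (i : ℕ) + (s : ℕ) + 1) ((n - 1) * (j - i - 1)) (seg x i (j - 1)) *
    ∏ u ∈ Finset.range s, x i (r - (j : ℕ) + (i : ℕ) + ((u : ℕ) + 1))

/-!
Write `σ^{(ρ)}` for `σ_{(n-1)(j-i)}^{(ρ)}(x_i,…,x_j)`, `σ'^{(ρ)}` for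
`σ_{(n-1)(j-i-1)}^{(ρ)}(x_i,…,x_{j-1})` and `E_p = ∏_t x_p^{(t)}`. Sorting the terms of
`σ^{(ρ)}` by the number of variables taken from `x_j` gives `σ^{(ρ)} = P_{n-1}^{(ρ)}`. Expanding
both `σ^{(ρ)}` and `σ^{(ρ-1)}` around the common `P_{n-2}^{(ρ-1)}` yields
`σ'^{(ρ)} (E_i - E_j) = x_i^{(ρ)} σ^{(ρ-1)} - x_j^{(ρ+j-i)} σ^{(ρ)}`, and iterating this along the
recursion of `P_k` in `k`,
`P_k^{(ρ)} (E_i - E_j) = σ^{(ρ-k-1)} x_i^{(ρ)} ⋯ x_i^{(ρ-k)} - σ^{(ρ)} x_j^{(ρ+j-i)} ⋯ x_j^{(ρ+j-i-k)}`.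
Combining the two,
`σ^{(ρ)} P_{k+1}^{(ρ+1)}
  = x_j^{(ρ+1+j-i)} P_k^{(ρ)} σ^{(ρ+1)} + σ^{(ρ-k-1)} σ'^{(ρ+1)} x_i^{(ρ)} ⋯ x_i^{(ρ-k)}`,
which is the step `S^k + T_{k+1} = S^{k+1}` once the `n - 2` factors `σ` of `T_{k+1}` are rotated
cyclically into place. Induction on `k` finishes the proof.
-/

section Tau

variable {n : ℕ}

lemma tauF_of_neg (r : ZMod n) {k : ℤ} (hk : k < 0) (z : List (Vec n)) : tauF n r k z = 0 := by
  simp [tauF, not_le.mpr hk]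

lemma tauF_nil (r : ZMod n) (k : ℤ) : tauF n r k [] = if k = 0 then 1 else 0 := by
  unfold tauF
  split_ifs <;> simp_all
  omega

lemma tauF_eq_zero_of_mul_length_lt (r : ZMod n) {k : ℤ} (z : List (Vec n))
    (hk : (((n - 1) * z.length : ℕ) : ℤ) < k) : tauF n r k z = 0 := by
  rw [tauF, if_pos (by omega)]
  refine sum_eq_zero fun c hc => absurd hc ?_
  simp only [mem_filter, Fintype.mem_piFinset, mem_range, not_and]
  intro hcn hck
  have hsum : ∑ i, c i ≤ ∑ _i : Fin z.length, (n - 1) :=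
    sum_le_sum fun i _ => Nat.le_sub_one_of_lt (hcn i)
  simp only [sum_const, card_univ, Fintype.card_fin, smul_eq_mul] at hsum
  rw [mul_comm] at hsum
  omega

lemma sum_filter_piFinset_fin_succ {β : Type*} [AddCommMonoid β] (S : Finset ℕ) (L m : ℕ)
    (f : (Fin (L + 1) → ℕ) → β) :
    ∑ c ∈ (Fintype.piFinset fun _ : Fin (L + 1) => S).filter (fun c => ∑ i, c i = m), f c
      = ∑ t ∈ S, ∑ c ∈ (Fintype.piFinset fun _ : Fin L => S).filter
          (fun c => t + ∑ i, c i = m), f (Fin.cons t c) := by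
  simp only [sum_filter]
  rw [← sum_product']
  refine sum_nbij' (fun c => (c 0, Fin.tail c)) (fun p => Fin.cons p.1 p.2) ?_ ?_ ?_ ?_ ?_
  · intro c hc
    simp only [Fintype.mem_piFinset, mem_product] at hc ⊢
    exact ⟨hc 0, fun a => hc a.succ⟩
  · intro p hp
    simpa [Fin.forall_fin_succ] using hp
  · intro c _; exact Fin.cons_self_tail c
  · intro p _; simp
  · intro c _
    simp only [Fin.sum_univ_succ, Fin.cons_self_tail]
    rfl

lemma sum_filter_lt_fin_cons_succ {L : ℕ} (t : ℕ) (c : Fin L → ℕ) (i : Fin L) :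
    ∑ i' ∈ univ.filter (fun i' => i' < i.succ), (Fin.cons t c : Fin (L + 1) → ℕ) i'
      = t + ∑ i' ∈ univ.filter (fun i' => i' < i), c i' := by
  rw [sum_filter, sum_filter, Fin.sum_univ_succ]
  simp [Fin.succ_lt_succ_iff, Fin.succ_pos]

lemma tauF_cons (r : ZMod n) (k : ℤ) (w : Vec n) (z : List (Vec n)) :
    tauF n r k (w :: z) = ∑ t ∈ range n,
      (∏ s ∈ range t, w (r - (s : ℕ))) * tauF n (r - (t : ℕ)) (k - (t : ℕ)) z := by
  rcases lt_or_ge k 0 with hk | hk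
  · rw [tauF_of_neg r hk]
    exact (sum_eq_zero fun t _ => by rw [tauF_of_neg _ (by omega), mul_zero]).symm
  obtain ⟨m, rfl⟩ : ∃ m : ℕ, k = m := ⟨k.toNat, (Int.toNat_of_nonneg hk).symm⟩
  rw [tauF, if_pos hk, Int.toNat_natCast]
  dsimp only [List.length_cons]
  rw [sum_filter_piFinset_fin_succ]
  refine sum_congr rfl fun t _ => ?_
  rcases le_or_gt t m with htm | htm
  · have hfilter : (Fintype.piFinset fun _ : Fin z.length => range n).filter
          (fun c => t + ∑ i, c i = m)
        = (Fintype.piFinset fun _ : Fin z.length => range n).filter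
          (fun c => ∑ i, c i = (((m : ℤ) - (t : ℕ)).toNat)) :=
      filter_congr fun c _ => by omega
    rw [hfilter, tauF, if_pos (by omega), mul_sum]
    refine sum_congr rfl fun c _ => ?_
    rw [Fin.prod_univ_succ]
    congr 1
    · simp only [Fin.cons_zero, not_lt_zero, filter_false, sum_empty, Nat.cast_zero, sub_zero,
        List.get_eq_getElem, List.length_cons, Fin.coe_ofNat_eq_mod, Nat.zero_mod]
      rfl
    · refine prod_congr rfl fun i _ => ?_
      rw [sum_filter_lt_fin_cons_succ]
      refine prod_congr rfl fun β _ => ?_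
      simp only [List.get_eq_getElem, Fin.val_succ, List.getElem_cons_succ]
      push_cast
      rw [sub_add_eq_sub_sub]
  · rw [filter_eq_empty_iff.mpr fun c _ => by omega, tauF_of_neg _ (by omega), mul_zero,
      sum_empty]

lemma tauF_append_singleton (z : List (Vec n)) (r : ZMod n) (k : ℤ) (y : Vec n) :
    tauF n r k (z ++ [y]) = ∑ d ∈ range n,
      tauF n r (k - (d : ℕ)) z *
        ∏ s ∈ range d, y (r - (k : ℤ) + (d : ℕ) - (s : ℕ)) := by
  induction z generalizing r k with
  | nil =>
    rw [List.nil_append, tauF_cons]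
    refine sum_congr rfl fun t _ => ?_
    rw [tauF_nil, tauF_nil]
    by_cases h : k - (t : ℕ) = 0
    · rw [if_pos h, mul_one, one_mul, show k = (t : ℕ) by omega]
      refine prod_congr rfl fun s _ => ?_
      congr 1
      push_cast
      ring
    · rw [if_neg h, mul_zero, zero_mul]
  | cons w z ih =>
    simp_rw [List.cons_append, tauF_cons, ih, mul_sum]
    rw [sum_comm]
    refine sum_congr rfl fun d _ => ?_
    rw [sum_mul]
    refine sum_congr rfl fun t _ => ?_
    rw [mul_assoc, sub_right_comm k, Int.cast_sub, Int.cast_natCast, sub_sub_sub_cancel_right]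

end Tau

section Sigma

variable {n : ℕ}

lemma sigmaF_cons_mul_length_add (r : ZMod n) (w : Vec n) (z : List (Vec n)) (e : ℕ) :
    sigmaF n r ((n - 1) * z.length + e) (w :: z)
      = (∏ s ∈ range e, w (r - (s : ℕ))) *
          sigmaF n (r - (e : ℕ)) ((n - 1) * z.length) (w :: z) := by
  set K := (n - 1) * z.length
  have hlow : ∑ t ∈ range e,
      (∏ β ∈ range t, w (r - (β : ℕ))) *
        tauF n (r - (t : ℕ)) ((K + e : ℕ) - (t : ℤ)) z = 0 :=
    sum_eq_zero fun t ht => by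
      rw [tauF_eq_zero_of_mul_length_lt _ _ (by simp at ht; omega), mul_zero]
  rw [sigmaF, sigmaF, mul_sum, show K + e + 1 = e + (K + 1) by ring, sum_range_add, hlow,
    zero_add]
  refine sum_congr rfl fun t _ => ?_
  rw [prod_range_add, mul_assoc]
  congr 2
  · refine prod_congr rfl fun s _ => ?_
    congr 1
    push_cast
    ring
  · congr 1 <;> push_cast <;> ring

lemma sigmaF_cons_append_singleton (r : ZMod n) (w y : Vec n) (z : List (Vec n)) {k : ℕ}
    (hk : n - 1 ≤ k) :
    sigmaF n r k (w :: (z ++ [y]))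
      = ∑ d ∈ range n, sigmaF n r (k - d) (w :: z) *
          ∏ s ∈ range d, y (r - (k : ℕ) + (d : ℕ) - (s : ℕ)) := by
  simp_rw [sigmaF, tauF_append_singleton, mul_sum, sum_mul]
  rw [sum_comm]
  refine sum_congr rfl fun d hd => ?_
  have hdk : d ≤ k := by simp at hd; omega
  rw [← sum_subset (range_subset_range.2 (by omega : k - d + 1 ≤ k + 1))]
  · refine sum_congr rfl fun t _ => ?_
    rw [mul_assoc, Int.cast_sub, Int.cast_natCast, Int.cast_natCast, sub_sub_sub_cancel_right,
      Nat.cast_sub hdk, sub_right_comm]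
  · intro t _ ht
    simp only [mem_range] at ht
    rw [tauF_of_neg _ (by omega), zero_mul, mul_zero]

end Sigma

section Seg

variable {n : ℕ}

lemma seg_length (x : ℕ → Vec n) (i j : ℕ) : (seg x i j).length = j + 1 - i := by
  simp [seg]

lemma seg_eq_cons (x : ℕ → Vec n) {i j : ℕ} (h : i ≤ j) :
    seg x i j = x i :: seg x (i + 1) j := by
  rw [seg, seg, show j + 1 - i = j + 1 - (i + 1) + 1 by omega, List.range_succ_eq_map,
    List.map_cons, List.map_map]
  congr 2
  funext a
  simp only [Function.comp_apply, Nat.succ_eq_add_one]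
  congr 1
  omega

lemma seg_eq_append (x : ℕ → Vec n) {i j : ℕ} (h : i ≤ j) (hj : 0 < j) :
    seg x i j = seg x i (j - 1) ++ [x j] := by
  rw [seg, seg, show j + 1 - i = (j - i) + 1 by omega, List.range_succ, List.map_append,
    show j - 1 + 1 - i = j - i by omega, List.map_singleton, Nat.add_sub_cancel' h]

end Seg

section P

variable {n : ℕ} (x : ℕ → Vec n) (i j : ℕ)

lemma PF_zero (r : ZMod n) :
    PF n r 0 i j x = sigmaF n r ((n - 1) * (j - i - 1)) (seg x i (j - 1)) := by
  simp [PF]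

lemma PF_succ (k : ℕ) (r : ZMod n) :
    PF n r (k + 1) i j x = x j (r + (j : ℕ) - (i : ℕ) - 1 - (k : ℕ)) * PF n r k i j x
      + (∏ s ∈ range (k + 1), x i (r - (s : ℕ))) *
        sigmaF n (r - ((k + 1 : ℕ) : ZMod n)) ((n - 1) * (j - i - 1)) (seg x i (j - 1)) := by
  rw [PF, sum_range_succ, PF, mul_sum, Nat.sub_self, prod_range_zero, mul_one]
  congr 1
  refine sum_congr rfl fun t ht => ?_
  have htk : t ≤ k := Nat.lt_succ_iff.mp (mem_range.mp ht)
  rw [Nat.sub_add_comm htk, prod_range_succ, Nat.cast_sub htk]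
  ring_nf

lemma PF_succ' (k : ℕ) (r : ZMod n) :
    PF n r (k + 1) i j x = x i r * PF n (r - 1) k i j x
      + sigmaF n r ((n - 1) * (j - i - 1)) (seg x i (j - 1)) *
          ∏ s ∈ range (k + 1), x j (r + (j : ℕ) - (i : ℕ) - 1 - (s : ℕ)) := by
  rw [PF, sum_range_succ', PF, mul_sum]
  congr 1
  · refine sum_congr rfl fun t _ => ?_
    rw [prod_range_succ', Nat.add_sub_add_right]
    push_cast
    ring_nf
  · simp

lemma sigmaF_seg_eq_PF (hn : 0 < n) (hij : i < j) (r : ZMod n) :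
    sigmaF n r ((n - 1) * (j - i)) (seg x i j) = PF n r (n - 1) i j x := by
  have hdeg : (n - 1) * (j - i) = (n - 1) * (j - i - 1) + (n - 1) := by
    rw [← Nat.mul_succ]; congr; omega
  have hlen : (seg x (i + 1) (j - 1)).length = j - i - 1 := by rw [seg_length]; omega
  rw [seg_eq_cons x hij.le, seg_eq_append x hij (by omega),
    sigmaF_cons_append_singleton r _ _ _ (Nat.le_mul_of_pos_right _ (Nat.sub_pos_of_lt hij)), PF,
    Nat.sub_add_cancel hn, ← sum_range_reflect]
  refine sum_congr rfl fun t ht => ?_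
  have ht' : t ≤ n - 1 := by simp at ht; omega
  have hdeg' : (n - 1) * (j - i) - (n - 1 - t) = (n - 1) * (seg x (i + 1) (j - 1)).length + t := by
    rw [hlen, hdeg]; omega
  rw [hdeg', sigmaF_cons_mul_length_add, hlen, ← seg_eq_cons x (by omega : i ≤ j - 1)]
  have hdeg_cast : (((n - 1) * (j - i) : ℕ) : ZMod n) = (i : ℕ) - (j : ℕ) := by
    rw [Nat.cast_mul, Nat.cast_sub hn, Nat.cast_sub hij.le, ZMod.natCast_self]
    ring
  have ht_cast : ((n - 1 - t : ℕ) : ZMod n) = -1 - (t : ℕ) := by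
    rw [Nat.cast_sub ht', Nat.cast_sub hn, ZMod.natCast_self]
    ring
  congr 1
  refine prod_congr rfl fun s _ => ?_
  rw [hdeg_cast, ht_cast]
  ring_nf

end P

section CyclicProd

variable {n : ℕ} {M : Type*} [CommMonoid M] (v : ZMod n → M)

lemma prod_range_sub_natCast (μ : ZMod n) :
    ∏ s ∈ range n, v (μ - s) = ∏ s ∈ range n, v s := by
  rcases n.eq_zero_or_pos with rfl | hn
  · simp
  have : NeZero n := NeZero.of_pos hn
  have hinv : ∀ s ∈ range n, (μ - ((μ - s).val : ZMod n)).val = s := fun s hs => by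
    rw [ZMod.natCast_zmod_val, sub_sub_cancel, ZMod.val_natCast_of_lt (mem_range.mp hs)]
  refine prod_nbij' (fun s => (μ - s).val) (fun s => (μ - s).val)
    (fun _ _ => mem_range.2 (ZMod.val_lt _)) (fun _ _ => mem_range.2 (ZMod.val_lt _))
    hinv hinv fun s _ => by rw [ZMod.natCast_zmod_val]

lemma prod_range_natCast_eq_mul_prod (hn : 0 < n) (μ : ZMod n) :
    ∏ s ∈ range n, v s = v μ * ∏ s ∈ range (n - 1), v (μ - 1 - s) := by
  obtain ⟨m, rfl⟩ : ∃ m, n = m + 1 := ⟨n - 1, by omega⟩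
  rw [← prod_range_sub_natCast v μ, prod_range_succ', Nat.add_sub_cancel, mul_comm]
  congr 1
  · simp
  · refine prod_congr rfl fun s _ => ?_
    push_cast
    ring_nf

lemma prod_range_window_wrap (f : ZMod n → M) (c : ZMod n) {k : ℕ} (hk : k + 1 ≤ n - 2) :
    ∏ u ∈ range (n - 2), f (c + ((k + 1 : ℕ) + 2 + u))
      = (∏ t ∈ range (n - 2 - (k + 1)), f (c + ((k + 1 : ℕ) + 2 + t)))
        * (f c * ∏ t ∈ range k, f (c + (t + 1))) := by
  -- the window runs past `c + n = c`
  have hwrap : ∀ m : ℕ,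
      ((k + 1 : ℕ) : ZMod n) + 2 + ((n - 2 - (k + 1) + m : ℕ) : ZMod n) = m := fun m => by
    rw [Nat.cast_add (n - 2 - (k + 1)), Nat.cast_sub hk, Nat.cast_sub (by omega : 2 ≤ n),
      ZMod.natCast_self]
    push_cast
    ring
  conv_lhs => rw [← Nat.sub_add_cancel hk, prod_range_add]
  simp_rw [hwrap]
  rw [prod_range_succ', Nat.cast_zero, add_zero, mul_comm _ (f c)]
  simp only [Nat.cast_succ]

end CyclicProd

section Telescoping

variable {n : ℕ} (x : ℕ → Vec n) {i j : ℕ}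

lemma sigmaF_seg_pred_mul_prod_sub_prod (hn : 2 ≤ n) (hij : i < j) (μ : ZMod n) :
    sigmaF n μ ((n - 1) * (j - i - 1)) (seg x i (j - 1)) *
        (∏ s ∈ range n, x i s - ∏ s ∈ range n, x j s)
      = x i μ * sigmaF n (μ - 1) ((n - 1) * (j - i)) (seg x i j)
        - x j (μ + (j : ℕ) - (i : ℕ)) * sigmaF n μ ((n - 1) * (j - i)) (seg x i j) := by
  have hn' : n - 1 = n - 2 + 1 := by omega
  have hsigma : sigmaF n μ ((n - 1) * (j - i)) (seg x i j)
      = x i μ * PF n (μ - 1) (n - 2) i j x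
        + sigmaF n μ ((n - 1) * (j - i - 1)) (seg x i (j - 1)) *
            ∏ s ∈ range (n - 1), x j (μ + (j : ℕ) - (i : ℕ) - 1 - (s : ℕ)) := by
    rw [sigmaF_seg_eq_PF x i j (by omega) hij, hn', PF_succ', ← hn']
  have hsigma_pred : sigmaF n (μ - 1) ((n - 1) * (j - i)) (seg x i j)
      = x j (μ + (j : ℕ) - (i : ℕ)) * PF n (μ - 1) (n - 2) i j x
        + (∏ s ∈ range (n - 1), x i (μ - 1 - (s : ℕ))) *
            sigmaF n μ ((n - 1) * (j - i - 1)) (seg x i (j - 1)) := by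
    have hcast : ((n - 2 : ℕ) : ZMod n) = -2 := by
      rw [Nat.cast_sub hn, ZMod.natCast_self]; ring
    rw [sigmaF_seg_eq_PF x i j (by omega) hij, hn', PF_succ, ← hn']
    congr 3
    · rw [hcast]; ring
    · rw [hn', Nat.cast_add, hcast]; ring
  rw [hsigma, hsigma_pred, prod_range_natCast_eq_mul_prod (x i) (by omega) μ,
    prod_range_natCast_eq_mul_prod (x j) (by omega) (μ + (j : ℕ) - (i : ℕ))]
  ring

lemma PF_mul_prod_sub_prod (hn : 2 ≤ n) (hij : i < j) (k : ℕ) (μ : ZMod n) :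
    PF n μ k i j x * (∏ s ∈ range n, x i s - ∏ s ∈ range n, x j s)
      = sigmaF n (μ - ((k + 1 : ℕ) : ZMod n)) ((n - 1) * (j - i)) (seg x i j) *
          ∏ s ∈ range (k + 1), x i (μ - (s : ℕ))
        - sigmaF n μ ((n - 1) * (j - i)) (seg x i j) *
          ∏ s ∈ range (k + 1), x j (μ + (j : ℕ) - (i : ℕ) - (s : ℕ)) := by
  induction k with
  | zero =>
    rw [PF_zero, sigmaF_seg_pred_mul_prod_sub_prod x hn hij]
    simp only [zero_add, Nat.cast_one, range_one, prod_singleton, Nat.cast_zero, sub_zero]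
    ring
  | succ k ih =>
    have hstep := sigmaF_seg_pred_mul_prod_sub_prod x hn hij (μ - ((k + 1 : ℕ) : ZMod n))
    have hj : μ + (j : ℕ) - (i : ℕ) - 1 - (k : ℕ)
        = μ - ((k + 1 : ℕ) : ZMod n) + (j : ℕ) - (i : ℕ) := by push_cast; ring
    have hj' : μ + (j : ℕ) - (i : ℕ) - ((k + 1 : ℕ) : ZMod n)
        = μ - ((k + 1 : ℕ) : ZMod n) + (j : ℕ) - (i : ℕ) := by ring
    have hi : μ - ((k + 1 + 1 : ℕ) : ZMod n) = μ - ((k + 1 : ℕ) : ZMod n) - 1 := by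
      push_cast; ring
    rw [PF_succ, prod_range_succ _ (k + 1), prod_range_succ _ (k + 1), hj, hj', hi]
    linear_combination x j (μ - ((k + 1 : ℕ) : ZMod n) + (j : ℕ) - (i : ℕ)) * ih
      + (∏ s ∈ range (k + 1), x i (μ - (s : ℕ))) * hstep

lemma sigmaF_mul_PF_succ (hn : 2 ≤ n) (hij : i < j) (k : ℕ) (μ : ZMod n) :
    sigmaF n μ ((n - 1) * (j - i)) (seg x i j) * PF n (μ + 1) (k + 1) i j x
      = x j (μ + 1 + (j : ℕ) - (i : ℕ)) * PF n μ k i j x *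
          sigmaF n (μ + 1) ((n - 1) * (j - i)) (seg x i j)
        + sigmaF n (μ - ((k + 1 : ℕ) : ZMod n)) ((n - 1) * (j - i)) (seg x i j) *
          sigmaF n (μ + 1) ((n - 1) * (j - i - 1)) (seg x i (j - 1)) *
          ∏ s ∈ range (k + 1), x i (μ - (s : ℕ)) := by
  have hP := PF_mul_prod_sub_prod x hn hij k μ
  have hsigma := sigmaF_seg_pred_mul_prod_sub_prod x hn hij (μ + 1)
  have hxj : ∏ s ∈ range (k + 1), x j (μ + 1 + (j : ℕ) - (i : ℕ) - 1 - (s : ℕ))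
      = ∏ s ∈ range (k + 1), x j (μ + (j : ℕ) - (i : ℕ) - (s : ℕ)) :=
    prod_congr rfl fun s _ => by ring_nf
  rw [add_sub_cancel_right] at hsigma
  rw [PF_succ', add_sub_cancel_right, hxj]
  linear_combination -PF n μ k i j x * hsigma
    + sigmaF n (μ + 1) ((n - 1) * (j - i - 1)) (seg x i (j - 1)) * hP

end Telescoping

section PartialSum

variable {n : ℕ} (r : ZMod n) (x : ℕ → Vec n)

noncomputable def closedFormS (i j k : ℕ) : ℝ :=
  (∏ u ∈ Finset.range (n - 1 - k), x j (r + (k : ℕ) + 1 + (u : ℕ) + 1)) *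
    (∏ t ∈ Finset.range k,
      sigmaF n (r - (j : ℕ) + (i : ℕ) + ((t : ℕ) + 1)) ((n - 1) * (j - i)) (seg x i j)) *
    PF n (r - (j : ℕ) + (i : ℕ) + (k : ℕ) + 1) k i j x *
    ∏ t ∈ Finset.range (n - 2 - k),
      sigmaF n (r - (j : ℕ) + (i : ℕ) + ((k : ℕ) + 2 + (t : ℕ))) ((n - 1) * (j - i))
        (seg x i j)

lemma TF_zero_eq_closedFormS_zero (i j : ℕ) : TF n r i j x 0 = closedFormS r x i j 0 := by
  rw [TF, closedFormS, PF_zero]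
  simp only [Nat.sub_zero, range_zero, prod_empty]
  ring

lemma closedFormS_add_TF_succ {i j : ℕ} (hij : i < j) {k : ℕ} (hk : k + 1 < n - 1) :
    closedFormS r x i j k + TF n r i j x (k + 1) = closedFormS r x i j (k + 1) := by
  have hn : 2 ≤ n := by omega
  have hW := sigmaF_mul_PF_succ x hn hij k (r - (j : ℕ) + (i : ℕ) + (k : ℕ) + 1)
  rw [closedFormS, closedFormS, TF]
  set c : ZMod n := r - (j : ℕ) + (i : ℕ) with hc
  have hxj : c + (k : ℕ) + 1 + 1 + (j : ℕ) - (i : ℕ) = r + ((k + 1 : ℕ) : ZMod n) + 1 := by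
    rw [hc]; push_cast; ring
  have hsucc : c + (k : ℕ) + 1 + 1 = c + ((k + 1 : ℕ) : ZMod n) + 1 := by push_cast; ring
  have hzero : c + (k : ℕ) + 1 - ((k + 1 : ℕ) : ZMod n) = c := by push_cast; ring
  rw [hxj, hsucc, hzero] at hW
  have hA : ∏ u ∈ range (n - 1 - k), x j (r + (k : ℕ) + 1 + (u : ℕ) + 1)
      = x j (r + ((k + 1 : ℕ) : ZMod n) + 1) *
        ∏ u ∈ range (n - 1 - (k + 1)),
          x j (r + ((k + 1 : ℕ) : ZMod n) + 1 + (u : ℕ) + 1) := by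
    rw [show n - 1 - k = n - 1 - (k + 1) + 1 by omega, prod_range_succ', mul_comm]
    congr 1
    · push_cast; ring_nf
    · refine prod_congr rfl fun u _ => ?_
      push_cast; ring_nf
  have hR : ∏ t ∈ range (n - 2 - k),
        sigmaF n (c + ((k : ℕ) + 2 + (t : ℕ))) ((n - 1) * (j - i)) (seg x i j)
      = sigmaF n (c + ((k + 1 : ℕ) : ZMod n) + 1) ((n - 1) * (j - i)) (seg x i j) *
        ∏ t ∈ range (n - 2 - (k + 1)),
          sigmaF n (c + (((k + 1 : ℕ) : ZMod n) + 2 + (t : ℕ))) ((n - 1) * (j - i))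
            (seg x i j) := by
    rw [show n - 2 - k = n - 2 - (k + 1) + 1 by omega, prod_range_succ', mul_comm]
    congr 1
    · push_cast; ring_nf
    · refine prod_congr rfl fun u _ => ?_
      push_cast; ring_nf
  have hL : ∏ t ∈ range (k + 1), sigmaF n (c + ((t : ℕ) + 1)) ((n - 1) * (j - i)) (seg x i j)
      = (∏ t ∈ range k, sigmaF n (c + ((t : ℕ) + 1)) ((n - 1) * (j - i)) (seg x i j)) *
        sigmaF n (c + (k : ℕ) + 1) ((n - 1) * (j - i)) (seg x i j) := by
    rw [prod_range_succ, ← add_assoc c]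
  have hM := prod_range_window_wrap
    (fun ρ => sigmaF n ρ ((n - 1) * (j - i)) (seg x i j)) c (k := k) (by omega)
  beta_reduce at hM
  have hX : ∏ u ∈ range (k + 1), x i (c + ((u : ℕ) + 1))
      = ∏ s ∈ range (k + 1), x i (c + (k : ℕ) + 1 - (s : ℕ)) := by
    rw [← prod_range_reflect]
    refine prod_congr rfl fun s hs => ?_
    rw [Nat.add_sub_cancel, Nat.cast_sub (by simp at hs; omega)]
    ring_nf
  rw [hA, hR, hL, hM, hX]
  linear_combination
    -(∏ u ∈ range (n - 1 - (k + 1)), x j (r + ((k + 1 : ℕ) : ZMod n) + 1 + (u : ℕ) + 1)) *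
      (∏ t ∈ range k, sigmaF n (c + ((t : ℕ) + 1)) ((n - 1) * (j - i)) (seg x i j)) *
      (∏ t ∈ range (n - 2 - (k + 1)),
          sigmaF n (c + (((k + 1 : ℕ) : ZMod n) + 2 + (t : ℕ))) ((n - 1) * (j - i))
            (seg x i j)) * hW

end PartialSum

theorem T_partial_sum_general (n : ℕ) (x : ℕ → Vec n)
    (i j : ℕ) (hij : i < j) (k : ℕ) (hk : k < n - 1) (r : ZMod n) :
    ∑ s ∈ Finset.range (k + 1), TF n r i j x s =
      (∏ u ∈ Finset.range (n - 1 - k), x j (r + (k : ℕ) + 1 + (u : ℕ) + 1)) *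
        (∏ t ∈ Finset.range k,
          sigmaF n (r - (j : ℕ) + (i : ℕ) + ((t : ℕ) + 1)) ((n - 1) * (j - i)) (seg x i j)) *
        PF n (r - (j : ℕ) + (i : ℕ) + (k : ℕ) + 1) k i j x *
        ∏ t ∈ Finset.range (n - 2 - k),
          sigmaF n (r - (j : ℕ) + (i : ℕ) + ((k : ℕ) + 2 + (t : ℕ))) ((n - 1) * (j - i))
            (seg x i j) := by
  show _ = closedFormS r x i j k
  induction k with
  | zero => rw [sum_range_one, TF_zero_eq_closedFormS_zero]
  | succ k ih => rw [sum_range_succ, ih (by omega), closedFormS_add_TF_succ r x hij hk]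

/-- partial sum formula `S^k = Σ_{s=0}^{k} T_s` for `0 ≤ k < n-1`. -/
theorem T_partial_sum (n : ℕ) (hn : 2 ≤ n) (x : ℕ → Vec n) (hx : ∀ p r, 0 < x p r)
    (i j : ℕ) (hi : 1 ≤ i) (hij : i < j) (k : ℕ) (hk : k < n - 1) (r : ZMod n) :
    ∑ s ∈ Finset.range (k + 1), TF n r i j x s =
      (∏ u ∈ Finset.range (n - 1 - k), x j (r + (k : ℕ) + 1 + (u : ℕ) + 1)) *
        (∏ t ∈ Finset.range k,
          sigmaF n (r - (j : ℕ) + (i : ℕ) + ((t : ℕ) + 1)) ((n - 1) * (j - i)) (seg x i j)) *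
        PF n (r - (j : ℕ) + (i : ℕ) + (k : ℕ) + 1) k i j x *
        ∏ t ∈ Finset.range (n - 2 - k),
          sigmaF n (r - (j : ℕ) + (i : ℕ) + ((k : ℕ) + 2 + (t : ℕ))) ((n - 1) * (j - i))
            (seg x i j) :=
  T_partial_sum_general n x i j hij k hk r
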